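/- Let γ(i,k) = (1/2)(b̃_{i,i}(2k-1) + b̃_{i,i}(2k+1)) for k ≥ 1. Then the twisted commutation exponent in the quantum folded T-system satisfies: the bar-invariance computation gives m̲^{(i)}[p,s) * m̲^{(i)}(p,s] = q^{α(i,k)} m̲^{(i)}(p,s) * m̲^{(i)}[p,s] with α(i,k) = γ(i,k) - d_i, where k = (s-p)/2, i.e. α(i,k) = -b̃_{i,i}(1) + (1/2)(b̃_{i,i}(2k+1) + b̃_{i,i}(2k-1)) and b̃_{i,i}(1) = d_i. -/

import Mathlib

/-!
STATEMENT 15.  Let `γ(i,k) = (1/2)(b̃_{i,i}(2k-1) + b̃_{i,i}(2k+1))` for `k ≥ 1`.  Then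
in the quantum torus the bar-invariant Kirillov–Reshetikhin monomials satisfy
`m̲^{(i)}[p,s) * m̲^{(i)}(p,s] = q^{α(i,k)} m̲^{(i)}(p,s) * m̲^{(i)}[p,s]`
with `α(i,k) = γ(i,k) - d_i`, where `k = (s-p)/2`; equivalently
`α(i,k) = -b̃_{i,i}(1) + (1/2)(b̃_{i,i}(2k+1) + b̃_{i,i}(2k-1))` and `b̃_{i,i}(1) = d_i`.

Encoding: `b̃` are the Laurent coefficients of the inverse symmetrized `t`-quantized
Cartan matrix; the quantum torus is modelled abstractly by invertible generators
`X i p : Aˣ`, central `q`-powers `qh : ℚ → Aˣ`, and the defining relations with exponents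
`N(i,p;j,s)`.  For a list of spectral parameters `ts` (in increasing order), the
bar-invariant monomial `m̲` is `liftM` = `q^{(1/2)Σ_{b>a} N(t_b,t_a)} Π X_{i,t}`, cf.
(eq. inv mono1) of the paper.  The KR monomials `m^{(i)}[p,s)`, `m^{(i)}(p,s]`,
`m^{(i)}(p,s)`, `m^{(i)}[p,s]` correspond to the parameter lists below, with `s = p+2k`.
-/

noncomputable section

open scoped Classical

namespace Stmt15

/-- Formal Laurent series over `ℚ`. -/
abbrev K : Type := LaurentSeries ℚ

/-- The variable `t`. -/
def tv : K := HahnSeries.single 1 1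

variable {I : Type*} [Fintype I] [DecidableEq I]

/-- The `t`-quantized Cartan matrix `Ⲝ(t)`. -/
def uC (C : I → I → ℤ) : Matrix I I K :=
  Matrix.of fun i j => if i = j then tv + tv⁻¹ else (C i j : K)

/-- The symmetrized matrix `ⲜB(t) = Ⲝ(t) D⁻¹`. -/
def uB (C : I → I → ℤ) (d : I → ℤ) : Matrix I I K :=
  uC C * Matrix.diagonal fun i => ((d i : K))⁻¹

/-- Its inverse `B̃(t)`. -/
def tB (C : I → I → ℤ) (d : I → ℤ) : Matrix I I K := (uB C d)⁻¹

/-- The Laurent coefficients `b̃_{i,j}(u)`. -/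
def btil (C : I → I → ℤ) (d : I → ℤ) (i j : I) (u : ℤ) : ℚ := ((tB C d) i j).coeff u

/-- The exponent function `N(i,p;j,s)`. -/
def Nq (C : I → I → ℤ) (d : I → ℤ) (i : I) (p : ℤ) (j : I) (s : ℤ) : ℚ :=
  btil C d i j (p - s - 1) - btil C d i j (s - p - 1) -
    btil C d i j (p - s + 1) + btil C d i j (s - p + 1)

/-- The Dynkin diagram of `C`. -/
def dynkinGraph (C : I → I → ℤ) : SimpleGraph I :=
  SimpleGraph.fromRel fun i j => C i j ≠ 0

/-- The `q^{1/2}`-exponent of the bar-invariant normalization of an ordered monomial. -/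
def liftC (Nf : ℤ → ℤ → ℚ) (ts : List ℤ) : ℚ :=
  (1 / 2) * ∑ b ∈ Finset.range ts.length, ∑ a ∈ Finset.range b,
    Nf (ts.getD b 0) (ts.getD a 0)

/-- The bar-invariant monomial in the variables `X_{i,t}`, `t ∈ ts`. -/
def liftM (C : I → I → ℤ) (d : I → ℤ) {A : Type*} [Ring A]
    (qh : ℚ → Aˣ) (X : I → ℤ → Aˣ) (i : I) (ts : List ℤ) : Aˣ :=
  qh (liftC (fun t t' => Nq C d i t i t') ts) * (ts.map (X i)).prod

/-! ### Auxiliary material -/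

set_option linter.unusedSectionVars false
set_option synthInstance.maxHeartbeats 1000000
set_option maxHeartbeats 1000000

def Wm (C : I → I → ℤ) : Matrix I I (PowerSeries ℚ) :=
  Matrix.of fun i j => if i = j then 1 + PowerSeries.X ^ 2
    else PowerSeries.C (R := ℚ) (C i j) * PowerSeries.X

def phiK : PowerSeries ℚ →+* K := HahnSeries.ofPowerSeries ℤ ℚ

theorem Wm_map_cc (C : I → I → ℤ) :
    (Wm C).map (PowerSeries.constantCoeff (R := ℚ)) = 1 := by
  apply Matrix.ext; intro i j
  by_cases h : i = j <;>
    simp [Wm, Matrix.map_apply, Matrix.one_apply, h]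

theorem Wm_det_isUnit (C : I → I → ℤ) : IsUnit (Wm C).det := by
  rw [PowerSeries.isUnit_iff_constantCoeff]
  have : (PowerSeries.constantCoeff (R := ℚ)) (Wm C).det = 1 := by
    rw [RingHom.map_det]
    rw [RingHom.mapMatrix_apply, Wm_map_cc]
    simp
  rw [this]; exact isUnit_one

theorem Wm_map_phi (C : I → I → ℤ) : (Wm C).map phiK = tv • uC C := by
  have htv : tv * tv⁻¹ = 1 := by
    apply mul_inv_cancel₀
    simpa [tv] using HahnSeries.single_ne_zero (one_ne_zero (α := ℚ))
  have hX : phiK PowerSeries.X = tv := HahnSeries.ofPowerSeries_X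
  have hC : ∀ r : ℚ, phiK (PowerSeries.C r) = HahnSeries.C r := fun r =>
    HahnSeries.ofPowerSeries_C r
  apply Matrix.ext; intro i j
  by_cases h : i = j
  · subst h
    simp only [Wm, Matrix.map_apply, Matrix.of_apply, if_pos rfl, uC,
      Matrix.smul_apply, smul_eq_mul, if_true]
    rw [map_add, map_one, map_pow, hX, mul_add, htv, sq]
    ring
  · simp only [Wm, Matrix.map_apply, Matrix.of_apply, if_neg h, uC,
      Matrix.smul_apply, smul_eq_mul]
    rw [map_mul, hC, hX]
    have : ((C i j : ℤ) : K) = HahnSeries.C ((C i j : ℤ) : ℚ) := by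
      rw [← map_intCast (HahnSeries.C (R := ℚ) (Γ := ℤ))]
    rw [this]
    ring

theorem tB_apply (C : I → I → ℤ) (d : I → ℤ) (hd : ∀ i, 0 < d i)
    (hdet : IsUnit (uB C d).det) (i j : I) :
    tB C d i j = (d i : K) *
      (tv * HahnSeries.ofPowerSeries ℤ ℚ ((Wm C)⁻¹ i j)) := by
  set V : Matrix I I (PowerSeries ℚ) := (Wm C)⁻¹ with hV
  set Tm : Matrix I I K := Matrix.diagonal (fun _ : I => tv) with hTm
  have hWdet := Wm_det_isUnit C
  have hVW : V * Wm C = 1 := Matrix.nonsing_inv_mul _ hWdet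
  have hWφ : (Wm C).map phiK = Tm * uC C := by
    rw [Wm_map_phi, hTm]
    apply Matrix.ext; intro a b
    rw [Matrix.diagonal_mul, Matrix.smul_apply, smul_eq_mul]
  set Z : Matrix I I K := V.map phiK * Tm with hZ
  have hZuC : Z * uC C = 1 := by
    rw [hZ, Matrix.mul_assoc, ← hWφ, ← Matrix.map_mul, hVW,
      Matrix.map_one phiK (map_zero _) (map_one _)]
  set M : Matrix I I K := Matrix.diagonal (fun i => (d i : K)) * Z with hM
  have hdK : ∀ i, (d i : K) ≠ 0 := by
    intro i
    rw [← map_intCast (HahnSeries.C (R := ℚ) (Γ := ℤ)) (d i)]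
    exact HahnSeries.C_ne_zero (by exact_mod_cast (hd i).ne')
  have hMuB : M * uB C d = 1 := by
    rw [hM, uB, Matrix.mul_assoc, ← Matrix.mul_assoc Z, hZuC, Matrix.one_mul,
      Matrix.diagonal_mul_diagonal]
    have : (fun i => (d i : K) * (d i : K)⁻¹) = fun _ => 1 :=
      funext fun i => mul_inv_cancel₀ (hdK i)
    rw [this, Matrix.diagonal_one]
  have htB : tB C d = M := Matrix.inv_eq_left_inv hMuB
  rw [htB, hM, Matrix.diagonal_mul, hZ, Matrix.mul_diagonal, Matrix.map_apply]
  rw [mul_comm (phiK (V i j)) tv]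
  rfl

theorem ofPS_coeff_neg (x : PowerSeries ℚ) (n : ℤ) (hn : n < 0) :
    (HahnSeries.ofPowerSeries ℤ ℚ x).coeff n = 0 := by
  rw [HahnSeries.ofPowerSeries_apply, HahnSeries.embDomain_notin_range]
  intro ⟨m, hm⟩
  replace hm : ((m : ℕ) : ℤ) = n := hm
  omega

theorem btil_coeff (C : I → I → ℤ) (d : I → ℤ) (hd : ∀ i, 0 < d i)
    (hdet : IsUnit (uB C d).det) (i j : I) (u : ℤ) :
    btil C d i j u =
      (d i : ℚ) * (HahnSeries.ofPowerSeries ℤ ℚ ((Wm C)⁻¹ i j)).coeff (u - 1) := by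
  rw [btil, tB_apply C d hd hdet]
  have h1 : ((d i : ℤ) : K) = HahnSeries.single (0 : ℤ) ((d i : ℤ) : ℚ) := by
    rw [← map_intCast (HahnSeries.C (R := ℚ) (Γ := ℤ)) (d i)]
    rfl
  rw [h1, HahnSeries.coeff_single_zero_mul]
  congr 1
  have h2 : u = (u - 1) + 1 := by ring
  rw [h2, tv, HahnSeries.coeff_single_mul_add, one_mul]
  congr 1
  omega

theorem btil_nonpos (C : I → I → ℤ) (d : I → ℤ) (hd : ∀ i, 0 < d i)
    (hdet : IsUnit (uB C d).det) (i j : I) (u : ℤ) (hu : u ≤ 0) :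
    btil C d i j u = 0 := by
  rw [btil_coeff C d hd hdet, ofPS_coeff_neg _ _ (by omega), mul_zero]

theorem btil_one_diag (C : I → I → ℤ) (d : I → ℤ) (hd : ∀ i, 0 < d i)
    (hdet : IsUnit (uB C d).det) (i : I) :
    btil C d i i 1 = (d i : ℚ) := by
  rw [btil_coeff C d hd hdet]
  have hcc : ((Wm C)⁻¹.map (PowerSeries.constantCoeff (R := ℚ))) = 1 := by
    have hWdet := Wm_det_isUnit C
    have hWV : Wm C * (Wm C)⁻¹ = 1 := Matrix.mul_nonsing_inv _ hWdet
    have := congrArg (Matrix.map · (PowerSeries.constantCoeff (R := ℚ))) hWV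
    simp only [Matrix.map_mul, Wm_map_cc,
      Matrix.map_one _ (map_zero _) (map_one _), Matrix.one_mul] at this
    exact this
  have : (HahnSeries.ofPowerSeries ℤ ℚ ((Wm C)⁻¹ i i)).coeff ((1 : ℤ) - 1) =
      PowerSeries.constantCoeff (R := ℚ) ((Wm C)⁻¹ i i) := by
    norm_num
    rw [show ((0 : ℤ) = ((0 : ℕ) : ℤ)) from rfl, HahnSeries.ofPowerSeries_apply_coeff]
    simp
  rw [this]
  rw [show (PowerSeries.constantCoeff (R := ℚ)) ((Wm C)⁻¹ i i) =
    ((Wm C)⁻¹.map (PowerSeries.constantCoeff (R := ℚ))) i i from rfl, hcc]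
  simp [Matrix.one_apply]

theorem Nq_shift (C : I → I → ℤ) (d : I → ℤ) (hd : ∀ i, 0 < d i)
    (hdet : IsUnit (uB C d).det) (i : I) (t : ℤ) (m : ℕ) (hm : 1 ≤ m) :
    Nq C d i (t + 2 * m) i t =
      btil C d i i (2 * (m : ℤ) - 1) - btil C d i i (2 * (m : ℤ) + 1) := by
  rw [Nq]
  have e2 : btil C d i i (t - (t + 2 * (m : ℤ)) - 1) = 0 :=
    btil_nonpos C d hd hdet i i _ (by omega)
  have e4 : btil C d i i (t - (t + 2 * (m : ℤ)) + 1) = 0 :=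
    btil_nonpos C d hd hdet i i _ (by omega)
  have h1 : t + 2 * (m : ℤ) - t - 1 = 2 * m - 1 := by ring
  have h3 : t + 2 * (m : ℤ) - t + 1 = 2 * m + 1 := by ring
  rw [e2, e4, h1, h3]
  ring

section QT
variable {A : Type*} [Ring A] (qh : ℚ → Aˣ)

theorem qh_zero (hq : ∀ a b : ℚ, qh (a + b) = qh a * qh b) : qh 0 = 1 := by
  have h := hq 0 0
  rw [add_zero] at h
  exact (mul_eq_left (a := qh 0)).mp h.symm

theorem qh_comm (hcen : ∀ (r : ℚ) (x : A), (qh r : A) * x = x * (qh r : A))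
    (r : ℚ) (u : Aˣ) : qh r * u = u * qh r := by
  ext; exact hcen r u

theorem move (hq : ∀ a b : ℚ, qh (a + b) = qh a * qh b)
    (hcen : ∀ (r : ℚ) (x : A), (qh r : A) * x = x * (qh r : A))
    (C : I → I → ℤ) (d : I → ℤ) (X : I → ℤ → Aˣ)
    (hrel : ∀ (i : I) (p : ℤ) (j : I) (s : ℤ),
      X i p * X j s = qh (Nq C d i p j s) * (X j s * X i p))
    (i : I) : ∀ (ts : List ℤ) (s : ℤ),
    ((ts.map (X i)).prod) * X i s =
      qh ((ts.map (fun t => Nq C d i t i s)).sum) * (X i s * (ts.map (X i)).prod)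
  | [], s => by simp [qh_zero qh hq]
  | t :: ts, s => by
    have ih := move hq hcen C d X hrel i ts s
    have hcomm : ∀ (r : ℚ) (u : Aˣ), qh r * u = u * qh r := qh_comm qh hcen
    simp only [List.map_cons, List.prod_cons, List.sum_cons]
    set S : ℚ := (ts.map (fun t => Nq C d i t i s)).sum with hS
    set N : ℚ := Nq C d i t i s with hN
    set P : Aˣ := (ts.map (X i)).prod with hP
    calc X i t * P * X i s
        = X i t * (P * X i s) := by rw [mul_assoc]
      _ = X i t * (qh S * (X i s * P)) := by rw [ih]
      _ = qh S * (X i t * (X i s * P)) := by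
          rw [← mul_assoc, ← hcomm, mul_assoc]
      _ = qh S * ((X i t * X i s) * P) := by rw [← mul_assoc (X i t)]
      _ = qh S * ((qh N * (X i s * X i t)) * P) := by rw [← hrel i t i s]
      _ = (qh S * qh N) * (X i s * (X i t * P)) := by
          rw [mul_assoc (qh N), ← mul_assoc (qh S), mul_assoc (X i s)]
      _ = qh (N + S) * (X i s * (X i t * P)) := by rw [← hq, add_comm]

end QT

theorem getD_map_range (g : ℕ → ℤ) {n b : ℕ} (hb : b < n) :
    (((List.range n).map g).getD b 0) = g b := by
  rw [List.getD_eq_getElem _ _ (by simpa using hb)]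
  simp

theorem range_map_succ (g : ℕ → ℤ) (n : ℕ) :
    (List.range (n+1)).map g = g 0 :: (List.range n).map (fun a => g (a+1)) := by
  rw [List.range_succ_eq_map, List.map_cons, List.map_map]
  rfl

theorem liftC_eval (C : I → I → ℤ) (d : I → ℤ) (i : I) (g : ℕ → ℤ) (n : ℕ) :
    liftC (fun t t' => Nq C d i t i t') ((List.range n).map g) =
      (1 / 2) * ∑ b ∈ Finset.range n, ∑ a ∈ Finset.range b,
        Nq C d i (g b) i (g a) := by
  rw [liftC, List.length_map, List.length_range]
  congr 1
  apply Finset.sum_congr rfl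
  intro b hb
  apply Finset.sum_congr rfl
  intro a ha
  rw [getD_map_range g (Finset.mem_range.mp hb),
    getD_map_range g (lt_trans (Finset.mem_range.mp ha) (Finset.mem_range.mp hb))]

theorem list_sum_map_range (h : ℕ → ℚ) (n : ℕ) :
    ((List.range n).map h).sum = ∑ a ∈ Finset.range n, h a := by
  induction n with
  | zero => simp
  | succ n ih =>
    rw [List.range_succ, List.map_append, List.sum_append, Finset.sum_range_succ, ih]
    simp

theorem coe_range (n : ℕ) :
    ((List.range n).flatMap fun a : ℕ => [(a : ℤ)]) =
      (List.range n).map (fun a : ℕ => (a : ℤ)) := by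
  induction n with
  | zero => rfl
  | succ m ih => rw [List.range_succ]; simp [ih]

theorem map_coe_range (n : ℕ) (f : ℤ → ℤ) :
    List.map f ((List.range n).flatMap fun a : ℕ => [(a : ℤ)]) =
      (List.range n).map (fun a : ℕ => f (a : ℤ)) := by
  rw [coe_range, List.map_map]
  rfl

theorem stmt15
    (C : I → I → ℤ) (d : I → ℤ)
    (hdiag : ∀ i, C i i = 2)
    (hoff : ∀ i j, i ≠ j → C i j ≤ 0)
    (hd : ∀ i, 0 < d i)
    (hsym : ∀ i j, d i * C i j = d j * C j i)
    (hconn : (dynkinGraph C).Connected)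
    (hposdef : ∀ v : I → ℚ, v ≠ 0 → 0 < ∑ i, ∑ j, v i * ((d i * C i j : ℤ) : ℚ) * v j)
    (hdet : IsUnit (uB C d).det)
    -- the quantum torus
    (A : Type*) [Ring A]
    (qh : ℚ → Aˣ) (hq : ∀ a b : ℚ, qh (a + b) = qh a * qh b)
    (hcen : ∀ (r : ℚ) (x : A), (qh r : A) * x = x * (qh r : A))
    (X : I → ℤ → Aˣ)
    (hrel : ∀ (i : I) (p : ℤ) (j : I) (s : ℤ),
      X i p * X j s = qh (Nq C d i p j s) * (X j s * X i p))
    (i : I) (p : ℤ) (k : ℕ) (hk : 1 ≤ k) :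
    -- `m̲^{(i)}[p,s) * m̲^{(i)}(p,s] = q^{α(i,k)} m̲^{(i)}(p,s) * m̲^{(i)}[p,s]`
    liftM C d qh X i ((List.range k).map fun a => p + 2 * (a : ℤ)) *
        liftM C d qh X i ((List.range k).map fun b => p + 2 * ((b : ℤ) + 1)) =
      qh ((1 / 2) * (btil C d i i (2 * (k : ℤ) - 1) + btil C d i i (2 * (k : ℤ) + 1))
            - (d i : ℚ)) *
        (liftM C d qh X i ((List.range (k - 1)).map fun b => p + 2 * ((b : ℤ) + 1)) *
          liftM C d qh X i ((List.range (k + 1)).map fun a => p + 2 * (a : ℤ))) ∧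
    -- `α(i,k) = -b̃_{i,i}(1) + (1/2)(b̃_{i,i}(2k+1) + b̃_{i,i}(2k-1))`
    (1 / 2) * (btil C d i i (2 * (k : ℤ) - 1) + btil C d i i (2 * (k : ℤ) + 1))
          - (d i : ℚ) =
        - btil C d i i 1 +
          (1 / 2) * (btil C d i i (2 * (k : ℤ) + 1) + btil C d i i (2 * (k : ℤ) - 1)) ∧
    -- `b̃_{i,i}(1) = d_i`
    btil C d i i 1 = (d i : ℚ) := by
  have hbtil1 : btil C d i i 1 = (d i : ℚ) := btil_one_diag C d hd hdet i
  obtain ⟨j, rfl⟩ : ∃ j, k = j + 1 := ⟨k - 1, by omega⟩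
  refine ⟨?_, by rw [hbtil1]; ring, hbtil1⟩
  -- abbreviations
  set e : ℕ → ℚ := fun m =>
    btil C d i i (2 * (m : ℤ) - 1) - btil C d i i (2 * (m : ℤ) + 1) with he
  set SS : ℕ → ℚ := fun n =>
    ∑ b ∈ Finset.range n, ∑ a ∈ Finset.range b, e (b - a) with hSSdef
  set Tn : ℕ → ℚ := fun n => ∑ a ∈ Finset.range n, e (a + 1) with hTndef
  -- e from Nq
  have key : ∀ (t1 t2 : ℤ) (b a : ℕ), a < b → t1 - t2 = 2 * (b : ℤ) - 2 * (a : ℤ) →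
      Nq C d i t1 i t2 = e (b - a) := by
    intro t1 t2 b a hab hdiff
    have hcast : (((b - a : ℕ)) : ℤ) = (b : ℤ) - (a : ℤ) := by
      exact_mod_cast Int.ofNat_sub hab.le
    have ht1 : t1 = t2 + 2 * ((b - a : ℕ) : ℤ) := by rw [hcast]; omega
    rw [ht1, Nq_shift C d hd hdet i t2 (b - a) (by omega)]
  -- values of the normalization constants
  have hc : ∀ (g : ℕ → ℤ) (n : ℕ), (∀ b a : ℕ, g b - g a = 2 * (b : ℤ) - 2 * (a : ℤ)) →
      liftC (fun t t' => Nq C d i t i t') ((List.range n).map g) = (1/2) * SS n := by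
    intro g n hg
    rw [liftC_eval C d i g n, hSSdef]
    congr 1
    apply Finset.sum_congr rfl
    intro b hb
    apply Finset.sum_congr rfl
    intro a ha
    exact key (g b) (g a) b a (Finset.mem_range.mp ha) (hg b a)
  have hc1 := hc (fun a : ℕ => p + 2 * (a : ℤ)) (j + 1)
    (by intro b a; push_cast; ring)
  have hc2 := hc (fun b : ℕ => p + 2 * ((b : ℤ) + 1)) (j + 1)
    (by intro b a; push_cast; ring)
  have hc3 := hc (fun b : ℕ => p + 2 * ((b : ℤ) + 1)) j
    (by intro b a; push_cast; ring)
  have hc4 := hc (fun a : ℕ => p + 2 * (a : ℤ)) (j + 2)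
    (by intro b a; push_cast; ring)
  -- the two list decompositions
  have hfun : (fun a : ℕ => p + 2 * ((a + 1 : ℕ) : ℤ)) =
      (fun b : ℕ => p + 2 * ((b : ℤ) + 1)) := by
    funext a; push_cast; ring
  have hL1 : (List.range (j + 1)).map (fun a : ℕ => p + 2 * (a : ℤ)) =
      p :: (List.range j).map (fun b : ℕ => p + 2 * ((b : ℤ) + 1)) := by
    rw [range_map_succ, hfun]
    congr 1
    simp
  have hL4 : (List.range (j + 2)).map (fun a : ℕ => p + 2 * (a : ℤ)) =
      p :: (List.range (j + 1)).map (fun b : ℕ => p + 2 * ((b : ℤ) + 1)) := by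
    rw [range_map_succ, hfun]
    congr 1
    simp
  -- recurrences for SS and Tn
  have hSSrec : ∀ n : ℕ, SS (n + 1) = SS n + Tn n := by
    intro n
    rw [hSSdef]
    simp only
    rw [Finset.sum_range_succ]
    congr 1
    rw [hTndef]
    simp only
    rw [← Finset.sum_range_reflect (fun a => e (a + 1)) n]
    apply Finset.sum_congr rfl
    intro a ha
    have := Finset.mem_range.mp ha
    congr 1
    omega
  have hTn_eq : ∀ n : ℕ, Tn n = btil C d i i 1 - btil C d i i (2 * (n : ℤ) + 1) := by
    intro n
    rw [hTndef]
    simp only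
    have : ∀ a : ℕ, e (a + 1) =
        (fun m : ℕ => btil C d i i (2 * (m : ℤ) + 1)) a -
          (fun m : ℕ => btil C d i i (2 * (m : ℤ) + 1)) (a + 1) := by
      intro a
      simp only [he]
      have h1 : 2 * ((a : ℤ) + 1) - 1 = 2 * (a : ℤ) + 1 := by ring
      push_cast
      rw [h1]
    rw [Finset.sum_congr rfl fun a _ => this a, Finset.sum_range_sub']
    norm_num
  -- the scalar identity
  set α : ℚ := (1 / 2) * (btil C d i i (2 * ((j + 1 : ℕ) : ℤ) - 1) +
      btil C d i i (2 * ((j + 1 : ℕ) : ℤ) + 1)) - (d i : ℚ) with hα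
  have hscal : (1/2) * SS (j+1) + (1/2) * SS (j+1) =
      α + ((1/2) * SS j + (1/2) * SS (j+2)) + Tn j := by
    have e1 : SS (j + 1) = SS j + Tn j := hSSrec j
    have e2 : SS (j + 2) = SS (j + 1) + Tn (j + 1) := hSSrec (j + 1)
    have e3 : Tn j = btil C d i i 1 - btil C d i i (2 * (j : ℤ) + 1) := hTn_eq j
    have e4 : Tn (j + 1) = btil C d i i 1 - btil C d i i (2 * ((j + 1 : ℕ) : ℤ) + 1) :=
      hTn_eq (j + 1)
    have hαval : α = (1/2) * (btil C d i i (2 * (j : ℤ) + 1) +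
        btil C d i i (2 * ((j + 1 : ℕ) : ℤ) + 1)) - btil C d i i 1 := by
      rw [hα, hbtil1]
      have : 2 * ((j + 1 : ℕ) : ℤ) - 1 = 2 * (j : ℤ) + 1 := by push_cast; ring
      rw [this]
    rw [e2, e1, e3, e4, hαval] at *
    ring
  have hcomm : ∀ (r : ℚ) (u : Aˣ), qh r * u = u * qh r := qh_comm qh hcen
  -- normalize the goal
  have hnorm : ∀ (n : ℕ) (f : ℤ → ℤ),
      List.map f ((List.range n).flatMap fun a : ℕ => [(a : ℤ)]) =
        (List.range n).map (fun a : ℕ => f (a : ℤ)) := fun n f => map_coe_range n f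
  simp only [Nat.add_sub_cancel]
  simp only [liftM]
  simp only [List.pure_def, List.bind_eq_flatMap, hnorm]
  rw [hc1, hc2, hc3, hc4]
  set P2 : Aˣ :=
    (((List.range (j + 1)).map (fun b : ℕ => p + 2 * ((b : ℤ) + 1))).map (X i)).prod with hP2
  set P3 : Aˣ :=
    (((List.range j).map (fun b : ℕ => p + 2 * ((b : ℤ) + 1))).map (X i)).prod with hP3
  have hP1 : ((((List.range (j + 1)).map (fun a : ℕ => p + 2 * (a : ℤ)))).map (X i)).prod =
      X i p * P3 := by
    rw [hL1, List.map_cons, List.prod_cons, hP3]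
  have hP4 : ((((List.range (j + 2)).map (fun a : ℕ => p + 2 * (a : ℤ)))).map (X i)).prod =
      X i p * P2 := by
    rw [hL4, List.map_cons, List.prod_cons, hP2]
  have hmove := move qh hq hcen C d X hrel i
    ((List.range j).map (fun b : ℕ => p + 2 * ((b : ℤ) + 1))) p
  have hT : (((List.range j).map (fun b : ℕ => p + 2 * ((b : ℤ) + 1))).map
      (fun t => Nq C d i t i p)).sum = Tn j := by
    rw [List.map_map]
    have hh : ((fun t => Nq C d i t i p) ∘ (fun b : ℕ => p + 2 * ((b : ℤ) + 1))) =
        fun a : ℕ => e (a + 1) := by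
      funext a
      have h0 : Nq C d i (p + 2 * ((a : ℤ) + 1)) i p = e ((a + 1) - 0) :=
        key (p + 2 * ((a : ℤ) + 1)) p (a + 1) 0 (by omega) (by push_cast; ring)
      simpa using h0
    rw [hh, list_sum_map_range]
  rw [hT] at hmove
  rw [← hP3] at hmove
  rw [hP1, hP4]
  calc (qh (1/2 * SS (j+1)) * (X i p * P3)) * (qh (1/2 * SS (j+1)) * P2)
      = qh (1/2 * SS (j+1)) * qh (1/2 * SS (j+1)) * ((X i p * P3) * P2) := by
        rw [mul_assoc, ← mul_assoc (X i p * P3), ← hcomm, mul_assoc, ← mul_assoc]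
    _ = qh (1/2 * SS (j+1) + 1/2 * SS (j+1)) * ((X i p * P3) * P2) := by rw [hq]
    _ = qh (α + (1/2 * SS j + 1/2 * SS (j+2)) + Tn j) * ((X i p * P3) * P2) := by
        rw [hscal]
    _ = qh α * (qh (1/2 * SS j) * qh (1/2 * SS (j+2)) * qh (Tn j)) *
          ((X i p * P3) * P2) := by rw [hq, hq, hq, mul_assoc (qh α)]
    _ = qh α * ((qh (1/2 * SS j) * P3) * (qh (1/2 * SS (j+2)) * (X i p * P2))) := by
        rw [mul_assoc (qh α)]
        congr 1
        calc qh (1/2 * SS j) * qh (1/2 * SS (j+2)) * qh (Tn j) * ((X i p * P3) * P2)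
            = qh (1/2 * SS j) * (qh (1/2 * SS (j+2)) * (qh (Tn j) * (X i p * P3) * P2)) := by
              rw [mul_assoc, mul_assoc, mul_assoc (qh (Tn j))]
          _ = qh (1/2 * SS j) * (qh (1/2 * SS (j+2)) * ((P3 * X i p) * P2)) := by
              rw [← hmove]
          _ = qh (1/2 * SS j) * (P3 * (qh (1/2 * SS (j+2)) * (X i p * P2))) := by
              congr 1
              rw [← mul_assoc P3, ← hcomm, mul_assoc (qh (1/2 * SS (j+2))) P3,
                mul_assoc P3]
          _ = (qh (1/2 * SS j) * P3) * (qh (1/2 * SS (j+2)) * (X i p * P2)) := by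
              rw [mul_assoc]


end Stmt15
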